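/- Let p be a prime and q = p^t for some t ≥ 0. Then for every S ⊆ [2q-1], β_{2q}(S) ≡ (-1)^{|S \ {q}|} (mod p). -/

import Mathlib

open Finset

/-- The descent set of a permutation of `{1,…,n}` (written as a permutation of `Fin n`),
as a subset of `[n-1] = {1,…,n-1}`: `i` is a descent if `π_i > π_{i+1}` (1-indexed). -/
def descSet (n : ℕ) (π : Equiv.Perm (Fin n)) : Finset ℕ :=
  (Finset.Icc 1 (n - 1)).filter (fun i =>
    ∃ h : i < n, π ⟨i, h⟩ < π ⟨i - 1, by omega⟩)

/-- `β_n(S)`: the number of permutations of `{1,…,n}` with descent set exactly `S`. -/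
def descBeta (n : ℕ) (S : Finset ℕ) : ℕ :=
  (Finset.univ.filter (fun π : Equiv.Perm (Fin n) => descSet n π = S)).card

/-- `α_n(S)`: the number of permutations of `{1,…,n}` with descent set contained in `S`. -/
def descAlpha (n : ℕ) (S : Finset ℕ) : ℕ :=
  (Finset.univ.filter (fun π : Equiv.Perm (Fin n) => descSet n π ⊆ S)).card

/-!
Write `q = p ^ t`. Since `α_n(S) = ∑_{T ⊆ S} β_n(T)`, and subset sums determine a function on
subsets, it suffices to show that `α_{2q}(S)` and `∑_{T ⊆ S} (-1)^{|T \ {q}|}` agree mod `p`;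
the latter is `[S = ∅] + 2 [S = {q}]`.

Cutting a permutation after the last allowed descent `m = max S` gives
`α_n(S) = C(n, m) α_m(S \ {m})`: the first `m` values form an arbitrary `m`-set, arranged with
descents in `S \ {m}`, and the remaining values follow in increasing order. Modulo `p`,
`(1 + X)^{2q} = (1 + X^q)^2`, so `C(2q, m)` vanishes for `0 < m < 2q` except `C(2q, q) = 2`, and
`C(q, m') = 0` for `0 < m' < q`. Hence `α_{2q}(S) ≡ [S = ∅] + 2 [S = {q}]`.
-/

theorem apply_lt_apply_succ_of_notMem_descSet {n i : ℕ} (π : Equiv.Perm (Fin n))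
    (h : i + 1 < n) (hi : i + 1 ∉ descSet n π) : π ⟨i, by omega⟩ < π ⟨i + 1, h⟩ := by
  refine lt_of_le_of_ne (not_lt.1 fun hlt => hi ?_) (fun heq => by simpa using π.injective heq)
  exact mem_filter.2 ⟨mem_Icc.2 ⟨by omega, by omega⟩, h, hlt⟩

theorem descSet_subset_iff {n : ℕ} (π : Equiv.Perm (Fin n)) (T : Finset ℕ) :
    descSet n π ⊆ T ↔
      ∀ a b : Fin n, a < b → Disjoint T (Ioc (a : ℕ) b) → π a < π b := by
  constructor
  · rintro hπ ⟨a, ha⟩ ⟨b, hb⟩ hab hdisj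
    simp only [Fin.mk_lt_mk] at hab ⊢
    induction b, hab using Nat.le_induction with
    | base =>
      exact apply_lt_apply_succ_of_notMem_descSet π hb fun h =>
        disjoint_left.1 hdisj (hπ h) (by simp)
    | succ b hab ih =>
      refine lt_trans (ih (by omega) (hdisj.mono_right (Ioc_subset_Ioc_right b.le_succ))) ?_
      exact apply_lt_apply_succ_of_notMem_descSet π hb fun h =>
        disjoint_left.1 hdisj (hπ h) (mem_Ioc.2 ⟨by simp; omega, le_rfl⟩)
  · intro hmono i hi
    obtain ⟨hiIcc, hin, hdesc⟩ := mem_filter.1 hi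
    by_contra hiT
    refine (hmono ⟨i - 1, by omega⟩ ⟨i, hin⟩ (by simp; grind) ?_).not_gt hdesc
    exact disjoint_left.2 fun j hjT hj => hiT (by grind)

theorem descAlpha_empty (n : ℕ) : descAlpha n ∅ = 1 := by
  have hmono : ∀ π : Equiv.Perm (Fin n), descSet n π ⊆ ∅ ↔ StrictMono π := fun π => by
    rw [descSet_subset_iff]
    simp [StrictMono]
  rw [descAlpha, card_eq_one]
  refine ⟨1, eq_singleton_iff_unique_mem.2 ⟨by simp [hmono, strictMono_id], fun π hπ => ?_⟩⟩
  exact Equiv.ext (congrFun ((hmono π).1 (mem_filter.1 hπ).2).eq_id)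

theorem descAlpha_eq_sum_descBeta (n : ℕ) (S : Finset ℕ) :
    descAlpha n S = ∑ T ∈ S.powerset, descBeta n T := by
  rw [descAlpha, card_eq_sum_card_fiberwise (f := descSet n) (t := S.powerset)
    fun π hπ => mem_powerset.2 (mem_filter.1 hπ).2]
  refine sum_congr rfl fun T hT => congrArg card ?_
  ext π
  simp only [mem_filter, mem_univ, true_and, and_iff_right_iff_imp]
  rintro rfl
  exact mem_powerset.1 hT

section PrefixDecomposition

variable {m k : ℕ}

theorem card_compl_of_card_eq {A : Finset (Fin (m + k))} (hA : #A = m) : #Aᶜ = k := by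
  rw [card_compl, hA, Fintype.card_fin, Nat.add_sub_cancel_left]

def prefixSet (π : Equiv.Perm (Fin (m + k))) : Finset (Fin (m + k)) :=
  univ.map ((Fin.castAddEmb k).trans π.toEmbedding)

theorem card_prefixSet (π : Equiv.Perm (Fin (m + k))) : #(prefixSet π) = m := by
  simp [prefixSet]

theorem apply_castAdd_mem_prefixSet (π : Equiv.Perm (Fin (m + k))) (j : Fin m) :
    π (Fin.castAdd k j) ∈ prefixSet π := by
  simp [prefixSet]

/-- The standardization of the first `m` values of `π`. -/
noncomputable def prefixPattern (π : Equiv.Perm (Fin (m + k))) : Equiv.Perm (Fin m) :=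
  Equiv.ofBijective
    (fun j => ((prefixSet π).orderIsoOfFin (card_prefixSet π)).symm
      ⟨π (Fin.castAdd k j), apply_castAdd_mem_prefixSet π j⟩)
    (Finite.injective_iff_bijective.1 fun _ _ h =>
      Fin.castAdd_injective _ _ (π.injective (congrArg Subtype.val (OrderIso.injective _ h))))

theorem orderEmbOfFin_prefixPattern (π : Equiv.Perm (Fin (m + k))) (j : Fin m) :
    (prefixSet π).orderEmbOfFin (card_prefixSet π) (prefixPattern π j) =
      π (Fin.castAdd k j) := by
  rw [← coe_orderIsoOfFin_apply]
  simp [prefixPattern]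

noncomputable def ofPrefix (A : Finset (Fin (m + k))) (hA : #A = m) (σ : Equiv.Perm (Fin m)) :
    Equiv.Perm (Fin (m + k)) :=
  Equiv.ofBijective
    (Fin.append (A.orderEmbOfFin hA ∘ σ) (Aᶜ.orderEmbOfFin (card_compl_of_card_eq hA)))
    (Finite.injective_iff_bijective.1 <| Fin.append_injective_iff.2
      ⟨(A.orderEmbOfFin hA).injective.comp σ.injective, (Aᶜ.orderEmbOfFin _).injective,
        fun _ j h => mem_compl.1 (h ▸ orderEmbOfFin_mem Aᶜ _ j) (orderEmbOfFin_mem A hA _)⟩)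

variable {A : Finset (Fin (m + k))} (hA : #A = m) (σ : Equiv.Perm (Fin m))

@[simp]
theorem ofPrefix_castAdd (j : Fin m) :
    ofPrefix A hA σ (Fin.castAdd k j) = A.orderEmbOfFin hA (σ j) := by
  simp [ofPrefix]

@[simp]
theorem ofPrefix_natAdd (i : Fin k) :
    ofPrefix A hA σ (Fin.natAdd m i) = Aᶜ.orderEmbOfFin (card_compl_of_card_eq hA) i := by
  simp [ofPrefix]

theorem prefixSet_ofPrefix : prefixSet (ofPrefix A hA σ) = A := by
  ext x
  simp only [prefixSet, mem_map, mem_univ, true_and, Function.Embedding.trans_apply,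
    Fin.castAddEmb_apply, Equiv.coe_toEmbedding, ofPrefix_castAdd]
  rw [← mem_coe, ← range_orderEmbOfFin A hA, ← σ.surjective.range_comp]
  rfl

theorem prefixPattern_ofPrefix : prefixPattern (ofPrefix A hA σ) = σ := by
  have hset := prefixSet_ofPrefix hA σ
  have hemb : ∀ (B : Finset (Fin (m + k))) (hB : #B = m), B = A →
      B.orderEmbOfFin hB = A.orderEmbOfFin hA := by
    rintro B hB rfl
    rfl
  refine Equiv.ext fun j => ?_
  apply (A.orderEmbOfFin hA).injective
  rw [← hemb _ (card_prefixSet _) hset, orderEmbOfFin_prefixPattern, ofPrefix_castAdd,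
    hemb _ _ hset]

variable {T : Finset ℕ}

theorem descSet_ofPrefix_subset (hmT : m ∈ T) (hσ : descSet m σ ⊆ T.erase m) :
    descSet (m + k) (ofPrefix A hA σ) ⊆ T := by
  rw [descSet_subset_iff] at hσ ⊢
  intro a b hab hdisj
  induction a using Fin.addCases with
  | left a =>
    induction b using Fin.addCases with
    | left b =>
      simp only [ofPrefix_castAdd, OrderEmbedding.lt_iff_lt]
      exact hσ a b ((Fin.strictMono_castAdd k).lt_iff_lt.1 hab)
        (by simpa using hdisj.mono_left (erase_subset m T))
    | right b =>
      exact absurd hmT (disjoint_left.1 hdisj · (by simp))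
  | right a =>
    induction b using Fin.addCases with
    | left b => exact absurd hab (by simp [Fin.lt_def]; omega)
    | right b => simpa using hab

theorem descSet_prefixPattern_subset {π : Equiv.Perm (Fin (m + k))}
    (hπ : descSet (m + k) π ⊆ T) :
    descSet m (prefixPattern π) ⊆ T.erase m := by
  rw [descSet_subset_iff] at hπ ⊢
  intro a b hab hdisj
  rw [← ((prefixSet π).orderEmbOfFin (card_prefixSet π)).lt_iff_lt,
    orderEmbOfFin_prefixPattern, orderEmbOfFin_prefixPattern]
  refine hπ _ _ ((Fin.strictMono_castAdd k) hab) (disjoint_left.2 fun i hiT hi => ?_)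
  simp only [Fin.val_castAdd, mem_Ioc] at hi
  exact disjoint_left.1 hdisj (mem_erase.2 ⟨by omega, hiT⟩) (mem_Ioc.2 hi)

/-- Past the last allowed descent `m`, `π` is increasing. -/
theorem apply_natAdd_eq_orderEmbOfFin (hmax : ∀ i ∈ T, i ≤ m) {π : Equiv.Perm (Fin (m + k))}
    (hπ : descSet (m + k) π ⊆ T) (i : Fin k) :
    π (Fin.natAdd m i) =
      (prefixSet π)ᶜ.orderEmbOfFin (card_compl_of_card_eq (card_prefixSet π)) i := by
  refine congrFun (orderEmbOfFin_unique (f := fun i => π (Fin.natAdd m i))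
    (card_compl_of_card_eq (card_prefixSet π)) (fun i => ?_) fun a b hab => ?_) i
  · simp only [prefixSet, mem_compl, mem_map, mem_univ, true_and, not_exists]
    intro j hj
    exact absurd (congrArg Fin.val (π.injective hj)) (by simp; omega)
  · refine (descSet_subset_iff π T).1 hπ _ _ (by simpa using hab)
      (disjoint_left.2 fun j hj hj' => ?_)
    have := hmax j hj
    simp only [Fin.val_natAdd, mem_Ioc] at hj'
    omega

theorem ofPrefix_prefixPattern (hmax : ∀ i ∈ T, i ≤ m) {π : Equiv.Perm (Fin (m + k))}
    (hπ : descSet (m + k) π ⊆ T) :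
    ofPrefix (prefixSet π) (card_prefixSet π) (prefixPattern π) = π := by
  refine Equiv.ext fun j => ?_
  induction j using Fin.addCases with
  | left j => rw [ofPrefix_castAdd, orderEmbOfFin_prefixPattern]
  | right i => rw [ofPrefix_natAdd, apply_natAdd_eq_orderEmbOfFin hmax hπ]

noncomputable def prefixEquiv (hmT : m ∈ T) (hmax : ∀ i ∈ T, i ≤ m) :
    {π : Equiv.Perm (Fin (m + k)) // descSet (m + k) π ⊆ T} ≃
      {A : Finset (Fin (m + k)) // #A = m} ×
        {σ : Equiv.Perm (Fin m) // descSet m σ ⊆ T.erase m} where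
  toFun π := (⟨prefixSet π.1, card_prefixSet π.1⟩,
    ⟨prefixPattern π.1, descSet_prefixPattern_subset π.2⟩)
  invFun Aσ := ⟨ofPrefix Aσ.1.1 Aσ.1.2 Aσ.2.1, descSet_ofPrefix_subset Aσ.1.2 Aσ.2.1 hmT Aσ.2.2⟩
  left_inv π := Subtype.ext (ofPrefix_prefixPattern hmax π.2)
  right_inv Aσ := Prod.ext (Subtype.ext (prefixSet_ofPrefix Aσ.1.2 Aσ.2.1))
    (Subtype.ext (prefixPattern_ofPrefix Aσ.1.2 Aσ.2.1))

theorem descAlpha_add_eq_choose_mul (hmT : m ∈ T) (hmax : ∀ i ∈ T, i ≤ m) :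
    descAlpha (m + k) T = (m + k).choose m * descAlpha m (T.erase m) := by
  simp only [descAlpha, ← Fintype.card_subtype]
  rw [Fintype.card_congr (prefixEquiv hmT hmax), Fintype.card_prod, Fintype.card_finset_len,
    Fintype.card_fin]

end PrefixDecomposition

theorem descAlpha_eq_choose_mul {n m : ℕ} {T : Finset ℕ} (hmn : m ≤ n) (hmT : m ∈ T)
    (hmax : ∀ i ∈ T, i ≤ m) : descAlpha n T = n.choose m * descAlpha m (T.erase m) := by
  obtain ⟨k, rfl⟩ := Nat.exists_eq_add_of_le hmn
  exact descAlpha_add_eq_choose_mul hmT hmax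

open Polynomial in
theorem cast_choose_two_mul_prime_pow {p : ℕ} [Fact p.Prime] (t k : ℕ) :
    ((2 * p ^ t).choose k : ZMod p) =
      (if k = 2 * p ^ t then 1 else 0) + (if k = p ^ t then 2 else 0) +
        (if k = 0 then 1 else 0) := by
  have hfrob : (X + 1 : (ZMod p)[X]) ^ (2 * p ^ t) = X ^ (2 * p ^ t) + 2 * X ^ p ^ t + 1 := by
    rw [mul_comm, pow_mul, add_pow_char_pow]
    ring
  rw [← coeff_X_add_one_pow, hfrob]
  simp [coeff_X_pow, coeff_one]

theorem cast_descAlpha_prime_pow {p : ℕ} (hp : p.Prime) (t : ℕ) {S : Finset ℕ}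
    (hS : S ⊆ Icc 1 (p ^ t - 1)) : (descAlpha (p ^ t) S : ZMod p) = if S = ∅ then 1 else 0 := by
  obtain rfl | hne := S.eq_empty_or_nonempty
  · simp [descAlpha_empty]
  have hm := mem_Icc.1 (hS (S.max'_mem hne))
  rw [descAlpha_eq_choose_mul (by omega) (S.max'_mem hne) (S.le_max' · ·), if_neg hne.ne_empty,
    Nat.cast_mul, (ZMod.natCast_eq_zero_iff _ _).2 (hp.dvd_choose_pow (by omega) (by omega)),
    zero_mul]

theorem cast_descAlpha_two_mul_prime_pow {p : ℕ} (hp : p.Prime) (t : ℕ) {S : Finset ℕ}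
    (hS : S ⊆ Icc 1 (2 * p ^ t - 1)) :
    (descAlpha (2 * p ^ t) S : ZMod p) =
      (if S = ∅ then 1 else 0) + (if S = {p ^ t} then 2 else 0) := by
  have := Fact.mk hp
  obtain rfl | hne := S.eq_empty_or_nonempty
  · simp [descAlpha_empty]
  obtain ⟨m, hmS, hmax⟩ : ∃ m ∈ S, ∀ i ∈ S, i ≤ m := ⟨S.max' hne, S.max'_mem hne, S.le_max'⟩
  have hm := mem_Icc.1 (hS hmS)
  rw [descAlpha_eq_choose_mul (by omega) hmS hmax, Nat.cast_mul, cast_choose_two_mul_prime_pow,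
    if_neg (show m ≠ 2 * p ^ t by omega), if_neg (show m ≠ 0 by omega), if_neg hne.ne_empty]
  by_cases hmq : m = p ^ t
  · subst hmq
    have hS' : S.erase (p ^ t) ⊆ Icc 1 (p ^ t - 1) := fun i hi => by
      have := mem_Icc.1 (hS (mem_of_mem_erase hi))
      have := hmax i (mem_of_mem_erase hi)
      exact mem_Icc.2 ⟨by omega, by have := ne_of_mem_erase hi; omega⟩
    rw [cast_descAlpha_prime_pow hp t hS']
    simp [erase_eq_empty_iff, hne.ne_empty]
  · have hSq : S ≠ {p ^ t} := by
      rintro rfl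
      exact hmq (mem_singleton.1 hmS)
    simp [hmq, hSq]

theorem sum_powerset_neg_one_pow_card_sdiff_singleton {α : Type*} [DecidableEq α] (q : α)
    (S : Finset α) :
    ∑ T ∈ S.powerset, (-1 : ℤ) ^ #(T \ {q}) =
      (if S = ∅ then 1 else 0) + (if S = {q} then 2 else 0) := by
  have hsdiff : ∀ T ∈ (S.erase q).powerset, T \ {q} = T ∧ insert q T \ {q} = T := by
    intro T hT
    have hqT : q ∉ T := fun hq => notMem_erase q S (mem_powerset.1 hT hq)
    rw [sdiff_singleton_eq_erase, sdiff_singleton_eq_erase, erase_insert hqT,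
      erase_eq_of_notMem hqT]
    exact ⟨rfl, rfl⟩
  by_cases hq : q ∈ S
  · conv_lhs => rw [← insert_erase hq]
    rw [sum_powerset_insert (notMem_erase q S),
      sum_congr rfl fun T hT => congrArg (_ ^ #·) (hsdiff T hT).1,
      sum_congr rfl fun T hT => congrArg (_ ^ #·) (hsdiff T hT).2, ← two_mul,
      sum_powerset_neg_one_pow_card]
    simp [erase_eq_empty_iff, ne_empty_of_mem hq]
  · rw [erase_eq_of_notMem hq] at hsdiff
    rw [sum_congr rfl fun T hT => congrArg (_ ^ #·) (hsdiff T hT).1,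
      sum_powerset_neg_one_pow_card]
    simp [show S ≠ {q} from fun h => hq (h ▸ mem_singleton_self q)]

theorem eq_of_forall_sum_powerset_eq {α M : Type*} [DecidableEq α] [AddCancelCommMonoid M]
    {U : Finset α} {f g : Finset α → M}
    (h : ∀ S ⊆ U, ∑ T ∈ S.powerset, f T = ∑ T ∈ S.powerset, g T) : ∀ S ⊆ U, f S = g S := by
  intro S
  induction S using Finset.strongInduction with
  | H S ih =>
    intro hS
    have hsum := h S hS
    have hproper : ∀ T ∈ S.powerset.erase S, f T = g T := fun T hT => by
      have hTS : T ⊂ S :=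
        Finset.ssubset_iff_subset_ne.2 ⟨mem_powerset.1 (mem_of_mem_erase hT), ne_of_mem_erase hT⟩
      exact ih T hTS (hTS.subset.trans hS)
    rw [← add_sum_erase _ _ (mem_powerset_self S), ← add_sum_erase _ _ (mem_powerset_self S),
      sum_congr rfl hproper] at hsum
    exact add_right_cancel hsum

/-- For a prime power `q = p^t`, `β_{2q}(S) ≡ (-1)^{|S \ {q}|} (mod p)`. -/
theorem stmt_13 (p t : ℕ) (hp : p.Prime) (S : Finset ℕ)
    (hS : S ⊆ Finset.Icc 1 (2 * p ^ t - 1)) :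
    (descBeta (2 * p ^ t) S : ℤ) ≡ (-1) ^ ((S \ {p ^ t}).card) [ZMOD p] := by
  rw [← ZMod.intCast_eq_intCast_iff]
  push_cast
  refine eq_of_forall_sum_powerset_eq (f := fun S => (descBeta (2 * p ^ t) S : ZMod p))
    (g := fun S => (-1) ^ #(S \ {p ^ t})) (fun S hS => ?_) S hS
  have hsum := congrArg (Int.cast : ℤ → ZMod p)
    (sum_powerset_neg_one_pow_card_sdiff_singleton (p ^ t) S)
  push_cast at hsum
  rw [← Nat.cast_sum, ← descAlpha_eq_sum_descBeta, cast_descAlpha_two_mul_prime_pow hp t hS, hsum]
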